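/- Let p ∈ ℕ (possibly 0) and a, b ∈ ℝ with a > 0 and b > 0; set q = a/b, and assume 1 − q^{2p+2}·(2p+1)·(1 − 2^{−1−2p}) ≠ 0. Then ζ(2p+2) = −( a^{2p+1} / ( (2p)!·( 1 − q^{2p+2}·(2p+1)·(1 − 2^{−1−2p}) ) ) ) · Re( ∫_{−∞}^{∞} x^{2p} · Log(1 − e^{ax})/(1 + e^{bx}) dx ), where Log denotes the principal branch of the complex logarithm. -/

import Mathlib

/-!
For `x > 0` the principal logarithm splits as `Log (1 - e^{ax}) = ax + log (1 - e^{-ax}) + πi`,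
while for `x < 0` it is real. Folding the integral onto `(0, ∞)` by `x ↦ -x` (the power `x^{2p}`
is even) and using `1/(1 + e^t) + 1/(1 + e^{-t}) = 1`, the real part becomes
`a ∫₀^∞ x^{2p+1}/(1 + e^{bx}) dx + ∫₀^∞ x^{2p} log (1 - e^{-ax}) dx`. Expanding `log (1 - e^{-ax})`
and `1/(1 + e^{bx})` into exponential series and integrating termwise with
`∫₀^∞ x^k e^{-cx} dx = k!/c^{k+1}` gives `(2p+1)! η(2p+2)/b^{2p+2}` and `-(2p)! ζ(2p+2)/a^{2p+1}`,
and `η(s) = (1 - 2^{1-s}) ζ(s)` lets one solve for `ζ(2p+2)`.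
-/

open MeasureTheory Filter

/-- Dirichlet eta function at natural arguments: `η(0)=1/2`, `η(1)=log 2`,
and for `s ≥ 2` the (absolutely convergent) series `∑ (-1)^{n+1}/n^s`. -/
noncomputable def dEta (s : ℕ) : ℝ :=
  if s = 0 then 1/2
  else if s = 1 then Real.log 2
  else ∑' n : ℕ, (-1 : ℝ)^n / ((n : ℝ)+1)^s

/-- Riemann zeta at natural arguments `s ≥ 2`: `∑ 1/n^s`. -/
noncomputable def rZeta (s : ℕ) : ℝ := ∑' n : ℕ, 1 / ((n : ℝ)+1)^s

/-- `negLi t u = Li_t(-u)` for `t ≥ 1`, `u > 0`, via the Fermi–Dirac integral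
representation `Li_t(-u) = -(1/(t-1)!) ∫_0^∞ s^{t-1}/(u⁻¹ e^s + 1) ds`. -/
noncomputable def negLi (t : ℕ) (u : ℝ) : ℝ :=
  -(1 / ((t-1).factorial : ℝ)) * ∫ s in Set.Ioi (0:ℝ), s^(t-1) / (u⁻¹ * Real.exp s + 1)

/-- Extended harmonic number `H_λ^{(p)} = ∑_{j=1}^∞ (1/j^p - 1/(j+λ)^p)`. -/
noncomputable def Hext (p : ℕ) (lam : ℝ) : ℝ :=
  ∑' j : ℕ, (1/((j:ℝ)+1)^p - 1/(((j:ℝ)+1)+lam)^p)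

/-- Alternating linear Euler sum `S^{+-}_{p,t}(r) = ∑_{n=1}^∞ (-1)^{n+1} H_{rn}^{(p)}/n^t`,
as a limit of partial sums. -/
noncomputable def eulerS (p t : ℕ) (r : ℝ) : ℝ :=
  limUnder atTop
    (fun N => ∑ n ∈ Finset.range N, (-1:ℝ)^n * Hext p (r*((n:ℝ)+1)) / ((n:ℝ)+1)^t)

open Set Real
open scoped Nat

lemma integrableOn_pow_mul_exp_neg_mul (n : ℕ) {c : ℝ} (hc : 0 < c) :
    IntegrableOn (fun x : ℝ => x ^ n * exp (-(c * x))) (Ioi 0) := by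
  simpa using integrableOn_rpow_mul_exp_neg_mul_rpow (p := 1) (s := n)
    (by linarith [n.cast_nonneg (α := ℝ)]) one_pos hc

lemma integral_pow_mul_exp_neg_mul_Ioi (n : ℕ) {c : ℝ} (hc : 0 < c) :
    ∫ x in Ioi (0 : ℝ), x ^ n * exp (-(c * x)) = n ! / c ^ (n + 1) := by
  have h := integral_rpow_mul_exp_neg_mul_Ioi (a := n + 1) (by positivity) hc
  rw [add_sub_cancel_right, Real.Gamma_nat_eq_factorial] at h
  norm_cast at h
  simpa [div_eq_inv_mul] using h

lemma integrable_of_hasSum_of_summable_integral_norm {α E : Type*} [MeasurableSpace α]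
    {μ : Measure α} [NormedAddCommGroup E] {F : ℕ → α → E} {g : α → E}
    (hF : ∀ n, Integrable (F n) μ) (hsum : Summable fun n => ∫ a, ‖F n a‖ ∂μ)
    (hg : ∀ᵐ a ∂μ, HasSum (F · a) (g a)) : Integrable g μ := by
  refine ⟨aestronglyMeasurable_of_tendsto_ae atTop
    (fun n => Finset.aestronglyMeasurable_fun_sum (Finset.range n) fun i _ => (hF i).1)
    (hg.mono fun a ha => ha.tendsto_sum_nat), ?_⟩
  have hle : ∀ᵐ a ∂μ, ‖g a‖ₑ ≤ ∑' n, ‖F n a‖ₑ := hg.mono fun a ha => by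
    rw [← ha.tsum_eq]; exact enorm_tsum_le_tsum_enorm
  calc ∫⁻ a, ‖g a‖ₑ ∂μ ≤ ∫⁻ a, ∑' n, ‖F n a‖ₑ ∂μ := lintegral_mono_ae hle
    _ = ∑' n, ENNReal.ofReal (∫ a, ‖F n a‖ ∂μ) := by
      rw [lintegral_tsum fun n => (hF n).1.enorm]
      simp_rw [ofReal_integral_norm_eq_lintegral_enorm (hF _)]
    _ < ⊤ := by
      rw [← ENNReal.ofReal_tsum_of_nonneg (fun n => integral_nonneg fun _ => norm_nonneg _) hsum]
      exact ENNReal.ofReal_lt_top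

lemma hasSum_integral_of_hasSum_of_summable_integral_norm {α E : Type*} [MeasurableSpace α]
    {μ : Measure α} [NormedAddCommGroup E] [NormedSpace ℝ E] {F : ℕ → α → E} {g : α → E}
    (hF : ∀ n, Integrable (F n) μ) (hsum : Summable fun n => ∫ a, ‖F n a‖ ∂μ)
    (hg : ∀ᵐ a ∂μ, HasSum (F · a) (g a)) : HasSum (fun n => ∫ a, F n a ∂μ) (∫ a, g a ∂μ) := by
  rw [integral_congr_ae (hg.mono fun a ha => ha.tsum_eq.symm)]
  exact hasSum_integral_of_summable_integral_norm hF hsum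

lemma integral_Ioi_of_hasSum_pow_mul_exp_neg_mul (k : ℕ) {w c : ℕ → ℝ} (hc : ∀ n, 0 < c n)
    (hw : Summable fun n => |w n| / c n ^ (k + 1)) {g : ℝ → ℝ}
    (hg : ∀ x > 0, HasSum (fun n => w n * (x ^ k * exp (-(c n * x)))) (g x)) :
    IntegrableOn g (Ioi 0) ∧ ∫ x in Ioi 0, g x = k ! * ∑' n, w n / c n ^ (k + 1) := by
  set F : ℕ → ℝ → ℝ := fun n x => w n * (x ^ k * exp (-(c n * x)))
  have hF : ∀ n, IntegrableOn (F n) (Ioi 0) := fun n =>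
    (integrableOn_pow_mul_exp_neg_mul k (hc n)).const_mul (w n)
  have hFnorm : ∀ n, ∫ x in Ioi 0, ‖F n x‖ = k ! * (|w n| / c n ^ (k + 1)) := fun n => by
    have h : EqOn (fun x => ‖F n x‖) (fun x => |w n| * (x ^ k * exp (-(c n * x)))) (Ioi 0) :=
      fun x (hx : 0 < x) => by
        simp only [F, norm_mul, Real.norm_eq_abs, abs_of_pos (exp_pos _),
          abs_of_nonneg (pow_nonneg hx.le k)]
    rw [setIntegral_congr_fun measurableSet_Ioi h, integral_const_mul,
      integral_pow_mul_exp_neg_mul_Ioi k (hc n)]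
    ring
  have hsum : Summable fun n => ∫ x in Ioi 0, ‖F n x‖ := by
    simpa only [hFnorm] using hw.mul_left (k ! : ℝ)
  have hg' : ∀ᵐ x ∂volume.restrict (Ioi 0), HasSum (F · x) (g x) :=
    (ae_restrict_mem measurableSet_Ioi).mono hg
  refine ⟨integrable_of_hasSum_of_summable_integral_norm hF hsum hg', ?_⟩
  rw [← (hasSum_integral_of_hasSum_of_summable_integral_norm hF hsum hg').tsum_eq,
    ← tsum_mul_left]
  refine tsum_congr fun n => ?_
  rw [integral_const_mul, integral_pow_mul_exp_neg_mul_Ioi k (hc n)]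
  ring

lemma summable_one_div_nat_add_one_pow {s : ℕ} (hs : 2 ≤ s) :
    Summable fun n : ℕ => 1 / ((n : ℝ) + 1) ^ s := by
  simpa using (summable_nat_add_iff 1).2 (Real.summable_one_div_nat_pow.2 hs)

lemma dEta_eq_mul_rZeta {s : ℕ} (hs : 2 ≤ s) : dEta s = (1 - 2 / 2 ^ s) * rZeta s := by
  set u : ℕ → ℝ := fun n => 1 / ((n : ℝ) + 1) ^ s
  have hu : HasSum u (rZeta s) := (summable_one_div_nat_add_one_pow hs).hasSum
  have hodd : HasSum (fun n => u (2 * n + 1)) (rZeta s / 2 ^ s) := by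
    have h : ∀ n, u (2 * n + 1) = u n / 2 ^ s := fun n => by
      simp only [u]
      push_cast
      rw [show 2 * (n : ℝ) + 1 + 1 = 2 * (n + 1) by ring, mul_pow]
      field_simp
    simpa only [h] using hu.div_const (2 ^ s)
  have heven : HasSum (fun n => u (2 * n)) (rZeta s - rZeta s / 2 ^ s) := by
    have he : HasSum (fun n => u (2 * n)) _ :=
      (hu.summable.comp_injective (mul_right_injective₀ two_ne_zero)).hasSum
    convert he using 1
    linarith [hu.unique (he.even_add_odd hodd)]
  have halt : HasSum (fun n : ℕ => (-1 : ℝ) ^ n / ((n : ℝ) + 1) ^ s)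
      (rZeta s - rZeta s / 2 ^ s + -(rZeta s / 2 ^ s)) := by
    refine HasSum.even_add_odd ?_ ?_
    · simpa [u, pow_mul] using heven
    · simpa [u, pow_succ, pow_mul, neg_div] using hodd.neg
  rw [dEta, if_neg (by omega), if_neg (by omega), halt.tsum_eq]
  ring

lemma integral_pow_mul_log_one_sub_exp_neg (k : ℕ) {a : ℝ} (ha : 0 < a) :
    IntegrableOn (fun x => x ^ k * log (1 - exp (-(a * x)))) (Ioi 0) ∧
      ∫ x in Ioi 0, x ^ k * log (1 - exp (-(a * x))) = -(k ! / a ^ (k + 1) * rZeta (k + 2)) := by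
  have hseries : ∀ x > 0, HasSum (fun n : ℕ => 1 / ((n : ℝ) + 1) *
      (x ^ k * exp (-(((n : ℝ) + 1) * a * x)))) (-(x ^ k * log (1 - exp (-(a * x))))) := by
    intro x hx
    have hq : |exp (-(a * x))| < 1 := by
      rw [abs_of_pos (exp_pos _), exp_lt_one_iff]
      nlinarith
    have h := (hasSum_pow_div_log_of_abs_lt_one hq).mul_left (x ^ k)
    rw [mul_neg] at h
    refine h.congr_fun fun n => ?_
    rw [← exp_nat_mul]
    push_cast
    ring_nf
  have hterm : ∀ n : ℕ, 1 / ((n : ℝ) + 1) / (((n : ℝ) + 1) * a) ^ (k + 1) =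
      1 / a ^ (k + 1) * (1 / ((n : ℝ) + 1) ^ (k + 2)) := fun n => by
    rw [mul_pow]
    field_simp
    ring
  have habs : ∀ n : ℕ, |1 / ((n : ℝ) + 1)| = 1 / ((n : ℝ) + 1) := fun n =>
    abs_of_pos (by positivity)
  obtain ⟨hint, hval⟩ := integral_Ioi_of_hasSum_pow_mul_exp_neg_mul k
    (fun n => by positivity) (by simpa only [habs, hterm] using
      (summable_one_div_nat_add_one_pow (by omega : 2 ≤ k + 2)).mul_left _) hseries
  refine ⟨by simpa using hint.neg, ?_⟩
  rw [← neg_neg (∫ x in Ioi 0, _), ← integral_neg, hval, tsum_congr hterm, tsum_mul_left, rZeta]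
  ring

lemma Integrable.div_one_add_exp {μ : Measure ℝ} {f : ℝ → ℝ} (hf : Integrable f μ) (c : ℝ) :
    Integrable (fun x => f x / (1 + exp (c * x))) μ := by
  simp_rw [div_eq_mul_inv]
  refine hf.mul_bdd (c := 1) (by fun_prop) (Eventually.of_forall fun x => ?_)
  rw [norm_inv, Real.norm_of_nonneg (by positivity)]
  exact inv_le_one_of_one_le₀ (le_add_of_nonneg_right (exp_pos _).le)

lemma pow_div_one_add_exp_eq (k : ℕ) (b x : ℝ) :
    x ^ k / (1 + exp (b * x)) = x ^ k * exp (-(b * x)) / (1 + exp (-(b * x))) := by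
  rw [exp_neg]
  field_simp
  ring

lemma integrableOn_pow_div_one_add_exp (k : ℕ) {b : ℝ} (hb : 0 < b) :
    IntegrableOn (fun x => x ^ k / (1 + exp (b * x))) (Ioi 0) := by
  simpa only [IntegrableOn, pow_div_one_add_exp_eq, neg_mul] using
    Integrable.div_one_add_exp (integrableOn_pow_mul_exp_neg_mul k hb) (-b)

lemma integral_pow_div_one_add_exp {k : ℕ} (hk : 1 ≤ k) {b : ℝ} (hb : 0 < b) :
    ∫ x in Ioi 0, x ^ k / (1 + exp (b * x)) = k ! / b ^ (k + 1) * dEta (k + 1) := by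
  have hseries : ∀ x > 0, HasSum (fun n : ℕ => (-1) ^ n *
      (x ^ k * exp (-(((n : ℝ) + 1) * b * x)))) (x ^ k / (1 + exp (b * x))) := by
    intro x hx
    have hq : |-exp (-(b * x))| < 1 := by
      rw [abs_neg, abs_of_pos (exp_pos _), exp_lt_one_iff]
      nlinarith
    have h := (hasSum_geometric_of_abs_lt_one hq).mul_left (x ^ k * exp (-(b * x)))
    rw [sub_neg_eq_add] at h
    rw [pow_div_one_add_exp_eq, div_eq_mul_inv]
    refine h.congr_fun fun n => ?_
    have hexp : exp (-(((n : ℝ) + 1) * b * x)) = exp (-(b * x)) * exp (-(b * x)) ^ n := by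
      rw [← exp_nat_mul, ← exp_add]
      ring_nf
    rw [neg_pow (exp _), hexp]
    ring
  have hterm : ∀ n : ℕ, (-1) ^ n / (((n : ℝ) + 1) * b) ^ (k + 1) =
      1 / b ^ (k + 1) * ((-1) ^ n / ((n : ℝ) + 1) ^ (k + 1)) := fun n => by
    rw [mul_pow]
    field_simp
  have hw : Summable fun n : ℕ => |(-1 : ℝ) ^ n| / (((n : ℝ) + 1) * b) ^ (k + 1) := by
    simp only [abs_pow, abs_neg, abs_one, one_pow, mul_pow, ← div_div]
    exact (summable_one_div_nat_add_one_pow (by omega : 2 ≤ k + 1)).div_const _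
  rw [(integral_Ioi_of_hasSum_pow_mul_exp_neg_mul k (fun n => by positivity) hw hseries).2,
    tsum_congr hterm, tsum_mul_left, dEta, if_neg (by omega), if_neg (by omega)]
  ring

theorem integral_eq_integral_Ioi_add_comp_neg {E : Type*} [NormedAddCommGroup E]
    [NormedSpace ℝ E] {f : ℝ → E} (hf : IntegrableOn f (Ioi 0))
    (hf_neg : IntegrableOn (fun x => f (-x)) (Ioi 0)) :
    ∫ x, f x = ∫ x in Ioi 0, (f x + f (-x)) := by
  have hIic : IntegrableOn f (Iic 0) := by
    rw [integrableOn_Iic_iff_integrableOn_Iio,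
      ← (Measure.measurePreserving_neg volume).integrableOn_comp_preimage
        (Homeomorph.neg ℝ).measurableEmbedding]
    simpa [Function.comp_def] using hf_neg
  rw [integral_add hf hf_neg, integral_comp_neg_Ioi, neg_zero, add_comm,
    intervalIntegral.integral_Iic_add_Ioi hIic hf]

lemma Complex.log_one_sub_exp_of_pos {t : ℝ} (ht : 0 < t) :
    log (1 - (Real.exp t : ℂ)) = ((t + Real.log (1 - Real.exp (-t)) : ℝ) : ℂ) + π * I := by
  have hsplit : (1 : ℂ) - (Real.exp t : ℂ) = ((Real.exp t - 1 : ℝ) : ℂ) * (-1) := by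
    push_cast; ring
  have hfactor : Real.exp t - 1 = Real.exp t * (1 - Real.exp (-t)) := by
    rw [mul_sub, ← Real.exp_add, add_neg_cancel, Real.exp_zero, mul_one]
  have hpos : 0 < 1 - Real.exp (-t) := sub_pos.2 (Real.exp_lt_one_iff.2 (neg_lt_zero.2 ht))
  rw [hsplit, log_ofReal_mul (by rw [hfactor]; positivity) (by norm_num), log_neg_one, hfactor,
    Real.log_mul (Real.exp_ne_zero t) hpos.ne', Real.log_exp]

lemma div_one_add_exp_add_div_one_add_exp_neg (y t : ℝ) :
    y / (1 + exp t) + y / (1 + exp (-t)) = y := by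
  rw [exp_neg]
  field_simp
  ring

section LogIntegrand

variable {a b : ℝ} {k : ℕ}

lemma pow_mul_log_one_sub_exp_div_one_add_exp_of_pos (ha : 0 < a) {x : ℝ} (hx : 0 < x) :
    (x : ℂ) ^ k * Complex.log (1 - (exp (a * x) : ℂ)) / (1 + (exp (b * x) : ℂ)) =
      ((a * (x ^ (k + 1) / (1 + exp (b * x))) +
          x ^ k * log (1 - exp (-(a * x))) / (1 + exp (b * x)) : ℝ) : ℂ) +
        ((π * (x ^ k / (1 + exp (b * x))) : ℝ) : ℂ) * Complex.I := by
  rw [Complex.log_one_sub_exp_of_pos (mul_pos ha hx)]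
  have hden : (1 : ℂ) + (exp (b * x) : ℂ) ≠ 0 := by
    exact_mod_cast (by positivity : 1 + exp (b * x) ≠ 0)
  push_cast
  field_simp
  ring

lemma pow_mul_log_one_sub_exp_div_one_add_exp_neg (hk : Even k) (ha : 0 < a) {x : ℝ}
    (hx : 0 < x) :
    ((-x : ℝ) : ℂ) ^ k * Complex.log (1 - (exp (a * -x) : ℂ)) / (1 + (exp (b * -x) : ℂ)) =
      ((x ^ k * log (1 - exp (-(a * x))) / (1 + exp (-(b * x))) : ℝ) : ℂ) := by
  have hpos : 0 ≤ 1 - exp (-(a * x)) := sub_nonneg.2 (exp_le_one_iff.2 (by nlinarith))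
  rw [Complex.ofReal_div, Complex.ofReal_mul, Complex.ofReal_log hpos, Complex.ofReal_neg,
    hk.neg_pow]
  push_cast
  ring_nf

lemma re_integral_pow_mul_log_one_sub_exp_div_one_add_exp (hk : Even k) (ha : 0 < a)
    (hb : 0 < b) :
    (∫ x : ℝ, (x : ℂ) ^ k * Complex.log (1 - (exp (a * x) : ℂ)) / (1 + (exp (b * x) : ℂ))).re =
      a * (∫ x in Ioi 0, x ^ (k + 1) / (1 + exp (b * x))) +
        ∫ x in Ioi 0, x ^ k * log (1 - exp (-(a * x))) := by
  set F : ℝ → ℂ := fun x => (x : ℂ) ^ k * Complex.log (1 - (exp (a * x) : ℂ)) /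
    (1 + (exp (b * x) : ℂ))
  have hφ := (integral_pow_mul_log_one_sub_exp_neg k ha).1
  have hψ := integrableOn_pow_div_one_add_exp (k + 1) hb
  have hF : IntegrableOn F (Ioi 0) :=
    IntegrableOn.congr_fun
      (((hψ.const_mul a).add (Integrable.div_one_add_exp hφ b)).ofReal.add
        (((integrableOn_pow_div_one_add_exp k hb).const_mul π).ofReal.mul_const Complex.I))
      (fun x hx => (pow_mul_log_one_sub_exp_div_one_add_exp_of_pos ha hx).symm)
      measurableSet_Ioi
  have hF_neg : IntegrableOn (fun x => F (-x)) (Ioi 0) :=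
    IntegrableOn.congr_fun (Integrable.div_one_add_exp hφ (-b)).ofReal
      (fun x hx => by
        rw [neg_mul]
        exact (pow_mul_log_one_sub_exp_div_one_add_exp_neg hk ha hx).symm)
      measurableSet_Ioi
  have hre : EqOn (fun x => (F x + F (-x)).re)
      (fun x => a * (x ^ (k + 1) / (1 + exp (b * x))) + x ^ k * log (1 - exp (-(a * x))))
      (Ioi 0) := fun x hx => by
    simp only [F, pow_mul_log_one_sub_exp_div_one_add_exp_of_pos ha hx,
      pow_mul_log_one_sub_exp_div_one_add_exp_neg hk ha hx, Complex.add_re, Complex.ofReal_re,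
      Complex.re_ofReal_mul, Complex.I_re, mul_zero, add_zero]
    rw [add_assoc, div_one_add_exp_add_div_one_add_exp_neg]
  have hsum : IntegrableOn (fun x => F x + F (-x)) (Ioi 0) := hF.add hF_neg
  calc (∫ x, F x).re = (∫ x in Ioi 0, (F x + F (-x))).re := by
        rw [integral_eq_integral_Ioi_add_comp_neg hF hF_neg]
    _ = ∫ x in Ioi 0, (F x + F (-x)).re := (integral_re hsum).symm
    _ = ∫ x in Ioi 0,
          (a * (x ^ (k + 1) / (1 + exp (b * x))) + x ^ k * log (1 - exp (-(a * x)))) :=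
        setIntegral_congr_fun measurableSet_Ioi hre
    _ = _ := by rw [integral_add (hψ.const_mul a) hφ, integral_const_mul]

end LogIntegrand

theorem stmt15 (p : ℕ) (a b : ℝ) (ha : 0 < a) (hb : 0 < b)
    (h : 1 - (a/b)^(2*p+2)*(2*(p:ℝ)+1)*(1 - (2:ℝ)^(-1-2*(p:ℤ))) ≠ 0) :
    rZeta (2*p+2) =
      -(a^(2*p+1) / (((2*p).factorial : ℝ) *
          (1 - (a/b)^(2*p+2)*(2*(p:ℝ)+1)*(1 - (2:ℝ)^(-1-2*(p:ℤ)))))) *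
        (∫ x : ℝ, (x:ℂ)^(2*p) * Complex.log (1 - (Real.exp (a*x) : ℂ)) /
          (1 + (Real.exp (b*x) : ℂ))).re := by
  have h2 : (2 : ℝ) ^ (-1 - 2 * (p : ℤ)) = 2 / 2 ^ (2 * p + 2) := by
    rw [show -1 - 2 * (p : ℤ) = 1 - (2 * p + 2 : ℕ) by push_cast; ring, zpow_sub₀ two_ne_zero,
      zpow_one, zpow_natCast]
  rw [h2] at h ⊢
  set D := 1 - (a / b) ^ (2 * p + 2) * (2 * (p : ℝ) + 1) * (1 - 2 / 2 ^ (2 * p + 2)) with hD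
  have hI : (∫ x : ℝ, (x : ℂ) ^ (2 * p) * Complex.log (1 - (exp (a * x) : ℂ)) /
      (1 + (exp (b * x) : ℂ))).re = -((2 * p)! / a ^ (2 * p + 1) * D * rZeta (2 * p + 2)) := by
    rw [re_integral_pow_mul_log_one_sub_exp_div_one_add_exp (even_two_mul p) ha hb,
      integral_pow_div_one_add_exp (by omega) hb, dEta_eq_mul_rZeta (by omega),
      (integral_pow_mul_log_one_sub_exp_neg (2 * p) ha).2, Nat.factorial_succ, hD, div_pow]
    push_cast
    field_simp
    ring
  rw [hI]
  field_simp
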